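/- For every positive integer n, the sum of divisors σ₁(n) of n satisfies σ₁(n) = −∑_π (−1)^{#π} ∑_{j=1}^{λ(π)} ( L(π) − λ(π) + j ), where the outer sum ranges over all partitions π of n into distinct parts, #π denotes the number of parts of π, λ(π) denotes the smallest part of π, and L(π) denotes the largest part of π. -/

import Mathlib

/-- The smallest part of a partition (the head of its parts sorted increasingly;
`0` for the empty partition, which does not occur for `n ≥ 1`). -/
def Nat.Partition.minPart {n : ℕ} (π : Nat.Partition n) : ℕ :=
  (π.parts.sort (· ≤ ·)).headI

/-- The largest part of a partition (`0` for the empty partition). -/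
def Nat.Partition.maxPart {n : ℕ} (π : Nat.Partition n) : ℕ :=
  π.parts.sup

/-!
Exchanging the two sums, the coefficient of `m` on the right-hand side is minus the signed count
`∑ (-1)^#π` over the distinct partitions `π` of `n` whose parts all lie in the window
`(L - m, L]` below their largest part `L ≥ m`; so it suffices to show that this count is `-1` when
`m ∣ n` and `0` otherwise. Writing `L = a + m`, such a partition is `{a + m} ∪ B` with
`B ⊆ [a + 1, a + m)`, so the count is minus the coefficient of `X^n` in
`P = ∑_a X^(a+m) ∏_{a<i<a+m} (1 - X^i)`. With `G a = ∏_{a≤i<a+m} (1 - X^i)` each summand times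
`1 - X^m` is `X^m (G (a+1) - G a)`, and `G 0 = 0`; the sum telescopes, so that `P` agrees with
`X^m / (1 - X^m) = ∑_{k≥1} X^(mk)` in every coefficient below the number of summands.
-/

open Finset Polynomial

namespace Polynomial

variable {R : Type*} [CommRing R]

theorem coeff_X_pow_mul_prod_one_sub_X_pow (e : ℕ) (s : Finset ℕ) (n : ℕ) :
    (X ^ e * ∏ i ∈ s, (1 - X ^ i : R[X])).coeff n =
      ∑ t ∈ s.powerset with e + ∑ i ∈ t, i = n, (-1) ^ #t := by
  have hexp : X ^ e * ∏ i ∈ s, (1 - X ^ i : R[X]) =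
      ∑ t ∈ s.powerset, C ((-1) ^ #t) * X ^ (e + ∑ i ∈ t, i) := by
    simp [prod_sub, prod_pow_eq_pow_sum _ (fun i => i), mul_sum, pow_add, mul_left_comm]
  simp only [hexp, finsetSum_coeff, coeff_C_mul_X_pow, sum_filter, eq_comm]

theorem X_pow_dvd_prod_one_sub_X_pow_sub_one {s : Finset ℕ} {A : ℕ} (h : ∀ i ∈ s, A ≤ i) :
    X ^ A ∣ ∏ i ∈ s, (1 - X ^ i : R[X]) - 1 := by
  induction s using Finset.induction_on with
  | empty => simp
  | insert a s ha ih =>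
    rw [prod_insert ha]
    have hs := ih fun i hi => h i (mem_insert_of_mem hi)
    have ha : X ^ A ∣ (X ^ a : R[X]) := pow_dvd_pow X (h a (mem_insert_self a s))
    have : (1 - X ^ a) * ∏ i ∈ s, (1 - X ^ i : R[X]) - 1 =
      (1 - X ^ a) * (∏ i ∈ s, (1 - X ^ i : R[X]) - 1) - X ^ a := by ring
    rw [this]
    exact dvd_sub (dvd_mul_of_dvd_right hs _) ha

theorem isCoprime_X_one_sub_X_pow {m : ℕ} (hm : m ≠ 0) : IsCoprime (X : R[X]) (1 - X ^ m) :=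
  ⟨X ^ (m - 1), 1, by rw [← pow_succ, Nat.sub_add_cancel (Nat.one_le_iff_ne_zero.2 hm)]; ring⟩

theorem one_sub_X_pow_mul_sum_range {m : ℕ} (hm : m ≠ 0) (A : ℕ) :
    (1 - X ^ m) * ∑ a ∈ range A, X ^ (a + m) * ∏ i ∈ Ico (a + 1) (a + m), (1 - X ^ i : R[X]) =
      X ^ m * ∏ i ∈ Ico A (A + m), (1 - X ^ i) := by
  set G : ℕ → R[X] := fun a => ∏ i ∈ Ico a (a + m), (1 - X ^ i)
  have step (a : ℕ) : (1 - X ^ m) * (X ^ (a + m) * ∏ i ∈ Ico (a + 1) (a + m), (1 - X ^ i)) =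
      X ^ m * (G (a + 1) - G a) := by
    simp only [G, show a + 1 + m = a + m + 1 by omega,
      prod_Ico_succ_top (show a + 1 ≤ a + m by omega),
      prod_eq_prod_Ico_succ_bot (show a < a + m by omega)]
    ring
  have hG0 : G 0 = 0 := prod_eq_zero (i := 0) (by simp; omega) (by simp)
  rw [mul_sum, sum_congr rfl fun a _ => step a, ← mul_sum, sum_range_sub G, hG0, sub_zero]

theorem coeff_sum_range_X_pow_mul_succ {m n A : ℕ} (hn : n ≠ 0) (hnA : n ≤ m * A) :
    (∑ k ∈ range A, X ^ (m * (k + 1)) : R[X]).coeff n = if m ∣ n then 1 else 0 := by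
  simp only [finsetSum_coeff, coeff_X_pow]
  split_ifs with hmn
  · obtain ⟨c, rfl⟩ := hmn
    have hc : c ≠ 0 := by rintro rfl; simp at hn
    have hm : m ≠ 0 := by rintro rfl; simp at hn
    have hcA : c ≤ A := Nat.le_of_mul_le_mul_left hnA (Nat.pos_of_ne_zero hm)
    rw [sum_eq_single_of_mem (c - 1) (mem_range.2 (by omega)),
      if_pos (by rw [Nat.sub_add_cancel (Nat.one_le_iff_ne_zero.2 hc)])]
    intro k _ hk
    rw [if_neg]
    intro h
    exact hk (by have := Nat.eq_of_mul_eq_mul_left (Nat.pos_of_ne_zero hm) h; omega)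
  · exact sum_eq_zero fun k _ => if_neg fun h => hmn ⟨k + 1, h⟩

theorem coeff_sum_range_X_pow_mul_prod {m n A : ℕ} (hm : m ≠ 0) (hn : n ≠ 0) (hnA : n < A) :
    (∑ a ∈ range A, X ^ (a + m) * ∏ i ∈ Ico (a + 1) (a + m), (1 - X ^ i : R[X])).coeff n =
      if m ∣ n then 1 else 0 := by
  set P := ∑ a ∈ range A, X ^ (a + m) * ∏ i ∈ Ico (a + 1) (a + m), (1 - X ^ i : R[X])
  set Q : R[X] := ∑ k ∈ range A, X ^ (m * (k + 1))
  have hQ : (1 - X ^ m) * Q = X ^ m - X ^ (m * (A + 1)) := by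
    have : Q = X ^ m * ∑ k ∈ range A, (X ^ m) ^ k := by
      simp only [Q, mul_sum, ← pow_mul, ← pow_add]
      exact sum_congr rfl fun k _ => by ring_nf
    rw [this, mul_left_comm, mul_neg_geom_sum]
    ring
  have hdvd : X ^ A ∣ (1 - X ^ m) * (P - Q) := by
    have hG := X_pow_dvd_prod_one_sub_X_pow_sub_one (R := R) (s := Ico A (A + m))
      fun i hi => (mem_Ico.1 hi).1
    rw [mul_sub, one_sub_X_pow_mul_sum_range hm, hQ,
      show ∀ G : R[X], X ^ m * G - (X ^ m - X ^ (m * (A + 1))) =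
        X ^ m * (G - 1) + X ^ (m * (A + 1)) from fun G => by ring]
    exact dvd_add (dvd_mul_of_dvd_right hG _)
      (pow_dvd_pow _ (by nlinarith [Nat.pos_of_ne_zero hm]))
  have hPQ := X_pow_dvd_iff.1
    ((isCoprime_X_one_sub_X_pow hm).pow_left.dvd_of_dvd_mul_left hdvd) n hnA
  rw [coeff_sub, sub_eq_zero] at hPQ
  rw [hPQ, coeff_sum_range_X_pow_mul_succ hn (by nlinarith [Nat.pos_of_ne_zero hm])]

end Polynomial

namespace Finset

theorem sum_Icc_sub_add_eq_sum_Ioc {l L : ℕ} (h : l ≤ L) :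
    ∑ j ∈ Icc 1 l, ((L : ℤ) - l + j) = ∑ m ∈ Ioc (L - l) L, (m : ℤ) := by
  have := sum_Ico_add' (fun x : ℕ => (x : ℤ)) 1 (l + 1) (L - l)
  rw [show 1 + (L - l) = L - l + 1 by omega, show l + 1 + (L - l) = L + 1 by omega,
    Ico_add_one_add_one_eq_Ioc, Ico_add_one_right_eq_Icc] at this
  rw [← this]
  refine sum_congr rfl fun j _ => ?_
  push_cast [Nat.cast_sub h]
  ring

theorem add_notMem_of_subset_Ico {a m : ℕ} {B : Finset ℕ} (hB : B ⊆ Ico (a + 1) (a + m)) :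
    a + m ∉ B := fun h => by simpa using hB h

theorem insert_add_injective_of_subset_Ico {m a a' : ℕ} {B B' : Finset ℕ}
    (hB : B ⊆ Ico (a + 1) (a + m)) (hB' : B' ⊆ Ico (a' + 1) (a' + m))
    (h : insert (a + m) B = insert (a' + m) B') : a = a' ∧ B = B' := by
  have hle {a a' : ℕ} {B' : Finset ℕ} (hB' : B' ⊆ Ico (a' + 1) (a' + m))
      (h : a + m ∈ insert (a' + m) B') : a ≤ a' := by
    rcases mem_insert.1 h with h | h
    · omega
    · have := mem_Ico.1 (hB' h); omega
  obtain rfl : a = a' :=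
    le_antisymm (hle hB' (h ▸ mem_insert_self _ _)) (hle hB (h ▸ mem_insert_self _ _))
  refine ⟨rfl, ?_⟩
  rw [← erase_insert (add_notMem_of_subset_Ico hB), h, erase_insert (add_notMem_of_subset_Ico hB')]

theorem sum_powerset_filter_window {M : Type*} [AddCommMonoid M] {m : ℕ} (hm : m ≠ 0) (n : ℕ)
    (f : Finset ℕ → M) :
    ∑ s ∈ (Icc 1 n).powerset with
        ∑ i ∈ s, i = n ∧ ∃ t ∈ s, m ≤ t ∧ ∀ x ∈ s, t - m < x ∧ x ≤ t, f s =
      ∑ a ∈ range (n + 1), ∑ B ∈ (Ico (a + 1) (a + m)).powerset with a + m + ∑ i ∈ B, i = n,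
        f (insert (a + m) B) := by
  rw [sum_sigma']
  symm
  refine sum_bij (fun x _ => insert (x.1 + m) x.2) ?_ ?_ ?_ (fun _ _ => rfl)
  · rintro ⟨a, B⟩ hx
    simp only [mem_sigma, mem_range, mem_filter, mem_powerset] at hx
    obtain ⟨-, hB, hsum⟩ := hx
    dsimp only
    have hsum' : ∑ i ∈ insert (a + m) B, i = n := by
      rw [sum_insert (add_notMem_of_subset_Ico hB), hsum]
    refine mem_filter.2 ⟨mem_powerset.2 fun x hx => ?_, hsum', a + m, mem_insert_self _ _,
      by omega, fun x hx => ?_⟩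
    · have := single_le_sum (fun i _ => Nat.zero_le i) hx
      rcases mem_insert.1 hx with rfl | hx
      · exact mem_Icc.2 ⟨by omega, by omega⟩
      · have := mem_Ico.1 (hB hx); exact mem_Icc.2 ⟨by omega, by omega⟩
    · rcases mem_insert.1 hx with rfl | hx
      · omega
      · have := mem_Ico.1 (hB hx); omega
  · rintro ⟨a, B⟩ hx ⟨a', B'⟩ hx' h
    simp only [mem_sigma, mem_filter, mem_powerset] at hx hx'
    obtain ⟨rfl, rfl⟩ := insert_add_injective_of_subset_Ico hx.2.1 hx'.2.1 h
    rfl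
  · intro s hs
    simp only [mem_filter, mem_powerset] at hs
    obtain ⟨hsub, hsum, t, ht, hmt, hwin⟩ := hs
    refine ⟨⟨t - m, s.erase t⟩, ?_, by simp only [Nat.sub_add_cancel hmt, insert_erase ht]⟩
    have := single_le_sum (fun i _ => Nat.zero_le i) ht
    simp only [mem_sigma, mem_range, mem_filter, mem_powerset, Nat.sub_add_cancel hmt]
    refine ⟨by omega, fun x hx => ?_, ?_⟩
    · have := hwin x (mem_of_mem_erase hx)
      have := ne_of_mem_erase hx
      exact mem_Ico.2 ⟨by omega, by omega⟩
    · rw [← hsum, ← add_sum_erase s _ ht]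

end Finset

namespace Nat.Partition

variable {n : ℕ} (π : n.Partition)

theorem parts_ne_zero (hn : n ≠ 0) : π.parts ≠ 0 := by
  rintro h
  exact hn (by simpa [h] using π.parts_sum.symm)

theorem le_maxPart {x : ℕ} (hx : x ∈ π.parts) : x ≤ π.maxPart :=
  Multiset.le_sup hx

theorem maxPart_le : π.maxPart ≤ n :=
  Multiset.sup_le.2 fun _ hx => π.parts_sum ▸ Multiset.le_sum_of_mem hx

theorem maxPart_mem (h : π.parts ≠ 0) : π.maxPart ∈ π.parts := by
  obtain ⟨y, hy, hmax⟩ := Multiset.exists_max_image id h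
  rwa [show π.maxPart = y from le_antisymm (Multiset.sup_le.2 hmax) (π.le_maxPart hy)]

theorem minPart_mem (h : π.parts ≠ 0) : π.minPart ∈ π.parts := by
  rw [minPart, ← Multiset.mem_sort (· ≤ ·)]
  rcases hl : π.parts.sort (· ≤ ·) with _ | ⟨y, l⟩
  · exact absurd (by simpa [hl] using (Multiset.sort_eq π.parts (· ≤ ·)).symm) h
  · exact List.mem_cons_self

theorem minPart_le {x : ℕ} (hx : x ∈ π.parts) : π.minPart ≤ x := by
  have hsort := Multiset.pairwise_sort π.parts (· ≤ ·)
  rw [← Multiset.mem_sort (· ≤ ·)] at hx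
  rw [minPart]
  rcases hl : π.parts.sort (· ≤ ·) with _ | ⟨y, l⟩
  · simp [hl] at hx
  · rw [hl] at hx hsort
    rcases List.mem_cons.1 hx with rfl | hx
    · exact le_rfl
    · exact List.rel_of_pairwise_cons hsort hx

theorem maxPart_sub_minPart_lt_and_le_maxPart_iff (hn : n ≠ 0) {m : ℕ} :
    (π.maxPart - π.minPart < m ∧ m ≤ π.maxPart) ↔
      ∃ t ∈ π.parts, m ≤ t ∧ ∀ x ∈ π.parts, t - m < x ∧ x ≤ t := by
  have hne := π.parts_ne_zero hn
  constructor
  · rintro ⟨hlt, hle⟩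
    refine ⟨π.maxPart, π.maxPart_mem hne, hle, fun x hx => ?_⟩
    have := π.minPart_le hx
    exact ⟨by omega, π.le_maxPart hx⟩
  · rintro ⟨t, ht, hmt, hwin⟩
    have hmax : π.maxPart = t :=
      le_antisymm (Multiset.sup_le.2 fun x hx => (hwin x hx).2) (π.le_maxPart ht)
    have := hwin _ (π.minPart_mem hne)
    omega

theorem sum_Icc_minPart_eq_sum_filter (hn : n ≠ 0) :
    ∑ j ∈ Icc 1 π.minPart, ((π.maxPart : ℤ) - π.minPart + j) =
      ∑ m ∈ Ico 1 (n + 1) with π.maxPart - π.minPart < m ∧ m ≤ π.maxPart, (m : ℤ) := by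
  have hne := π.parts_ne_zero hn
  rw [sum_Icc_sub_add_eq_sum_Ioc (π.minPart_le (π.maxPart_mem hne))]
  congr 1
  ext m
  simp only [mem_Ioc, mem_filter, mem_Ico]
  have := π.maxPart_le
  omega

theorem sum_distincts_eq_sum_powerset {M : Type*} [AddCommMonoid M] (n : ℕ)
    (f : Finset ℕ → M) :
    ∑ π ∈ distincts n, f π.parts.toFinset = ∑ s ∈ (Icc 1 n).powerset with ∑ i ∈ s, i = n, f s := by
  have hval {π : n.Partition} (hπ : π ∈ distincts n) : π.parts.toFinset.val = π.parts := by
    rw [Multiset.toFinset_val, (mem_filter.1 hπ).2.dedup]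
  refine sum_bij' (fun π _ => π.parts.toFinset)
    (fun s hs => ⟨s.val, fun hi => ?_, (sum_val s).trans (mem_filter.1 hs).2⟩) ?_ ?_ ?_ ?_ ?_
  · exact (mem_Icc.1 ((mem_powerset.1 (mem_filter.1 hs).1) hi)).1
  · intro π hπ
    simp only [mem_filter, mem_powerset]
    refine ⟨fun x hx => ?_, (sum_val _).symm.trans (by rw [hval hπ, π.parts_sum])⟩
    rw [Multiset.mem_toFinset] at hx
    exact mem_Icc.2 ⟨π.parts_pos hx, π.parts_sum ▸ Multiset.le_sum_of_mem hx⟩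
  · intro s _
    exact mem_filter.2 ⟨mem_univ _, s.nodup⟩
  · intro π hπ
    exact Nat.Partition.ext (hval hπ)
  · intro s _
    exact Finset.val_toFinset s
  · intro π _
    rfl

theorem sum_distincts_filter_neg_one_pow_eq_neg_ite_dvd {m : ℕ} (hn : n ≠ 0) (hm : m ≠ 0) :
    ∑ π ∈ distincts n with π.maxPart - π.minPart < m ∧ m ≤ π.maxPart,
        (-1 : ℤ) ^ Multiset.card π.parts = -if m ∣ n then 1 else 0 := by
  calc _ = ∑ π ∈ distincts n, if ∃ t ∈ π.parts.toFinset, m ≤ t ∧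
          ∀ x ∈ π.parts.toFinset, t - m < x ∧ x ≤ t then (-1 : ℤ) ^ #π.parts.toFinset else 0 := by
        rw [sum_filter]
        refine sum_congr rfl fun π hπ => ?_
        rw [Multiset.toFinset_card_of_nodup (mem_filter.1 hπ).2]
        exact if_congr
          (by simp only [π.maxPart_sub_minPart_lt_and_le_maxPart_iff hn, Multiset.mem_toFinset])
          rfl rfl
    _ = ∑ s ∈ (Icc 1 n).powerset with
          ∑ i ∈ s, i = n ∧ ∃ t ∈ s, m ≤ t ∧ ∀ x ∈ s, t - m < x ∧ x ≤ t, (-1) ^ #s := by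
        rw [sum_distincts_eq_sum_powerset n (fun s => if ∃ t ∈ s, m ≤ t ∧
          ∀ x ∈ s, t - m < x ∧ x ≤ t then (-1 : ℤ) ^ #s else 0), ← sum_filter, filter_filter]
    _ = -∑ a ∈ range (n + 1), ∑ B ∈ (Ico (a + 1) (a + m)).powerset with
          a + m + ∑ i ∈ B, i = n, (-1) ^ #B := by
        rw [sum_powerset_filter_window hm, ← sum_neg_distrib]
        refine sum_congr rfl fun a _ => ?_
        rw [← sum_neg_distrib]
        refine sum_congr rfl fun B hB => ?_
        rw [card_insert_of_notMem (add_notMem_of_subset_Ico (mem_powerset.1 (mem_filter.1 hB).1)),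
          pow_succ, mul_neg_one]
    _ = -(∑ a ∈ range (n + 1),
          X ^ (a + m) * ∏ i ∈ Ico (a + 1) (a + m), (1 - X ^ i : ℤ[X])).coeff n := by
        simp only [finsetSum_coeff, coeff_X_pow_mul_prod_one_sub_X_pow]
    _ = -if m ∣ n then 1 else 0 := by
        rw [coeff_sum_range_X_pow_mul_prod hm hn n.lt_succ_self]

end Nat.Partition

/-- **Bressoud–Subbarao, first power.** For every positive integer `n`,
`σ₁(n) = -∑_π (-1)^(#π) ∑_{j=1}^{λ(π)} (L(π) - λ(π) + j)`, the outer sum ranging over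
all partitions `π` of `n` into distinct parts, where `#π` is the number of parts,
`λ(π)` the smallest part and `L(π)` the largest part of `π`. -/
theorem sigma_one_eq_neg_alternating_sum (n : ℕ) (hn : 0 < n) :
    (∑ d ∈ n.divisors, (d : ℤ)) =
      -∑ π ∈ Nat.Partition.distincts n,
        (-1 : ℤ) ^ (Multiset.card π.parts) *
          ∑ j ∈ Finset.Icc 1 π.minPart,
            ((π.maxPart : ℤ) - (π.minPart : ℤ) + (j : ℤ)) := by
  calc ∑ d ∈ n.divisors, (d : ℤ)
      = -∑ m ∈ Ico 1 (n + 1), (m : ℤ) * ∑ π ∈ Nat.Partition.distincts n with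
          π.maxPart - π.minPart < m ∧ m ≤ π.maxPart, (-1) ^ Multiset.card π.parts := by
        rw [Nat.divisors, sum_filter, ← sum_neg_distrib]
        refine sum_congr rfl fun m hm => ?_
        rw [Nat.Partition.sum_distincts_filter_neg_one_pow_eq_neg_ite_dvd hn.ne'
          (by simp only [mem_Ico] at hm; omega)]
        split_ifs <;> simp
    _ = -∑ π ∈ Nat.Partition.distincts n, (-1) ^ Multiset.card π.parts *
          ∑ m ∈ Ico 1 (n + 1) with π.maxPart - π.minPart < m ∧ m ≤ π.maxPart, (m : ℤ) := by
        simp only [sum_filter, mul_sum, mul_ite, mul_zero]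
        rw [sum_comm]
        simp only [mul_comm]
    _ = _ := by
        simp only [Nat.Partition.sum_Icc_minPart_eq_sum_filter _ hn.ne']
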